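/- Pumping lemma for separated tropical automata: assume ⟦A_max⟧ ≤ ⟦A_min⟧. Let P = Prod(c) for some context c, R = Reach(u) for some term u, and let m be a context. Then there exists a real number x such that every run of A_max over m from p to p with p ∈ P ∩ R has weight at most x, and every run of A_min over m from q to q with q ∈ P ∩ R has weight at least x. -/

import Mathlib

/-- A ranked alphabet: symbols with arities. -/
structure RankedAlphabet where
  symb : Type
  ar : symb → ℕ

/-- Terms (finite ranked trees) over a ranked alphabet. -/
inductive Term (A : RankedAlphabet) : Type where
  | node (a : A.symb) (ts : Fin (A.ar a) → Term A) : Term A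

/-- Height of a term: length of the longest branch. -/
def Term.height {A : RankedAlphabet} : Term A → ℕ
  | .node _ ts => Finset.univ.sup fun i => (ts i).height + 1

/-- Size of a term: number of nodes. -/
def Term.size {A : RankedAlphabet} : Term A → ℕ
  | .node _ ts => 1 + ∑ i, (ts i).size

/-- A nondeterministic tree automaton with real weights on transitions and final states. -/
structure WTA (A : RankedAlphabet) (Q : Type) where
  trans : (a : A.symb) → (Fin (A.ar a) → Q) → Q → Prop
  wt : (a : A.symb) → (Fin (A.ar a) → Q) → Q → ℝ
  final : Q → Prop
  fwt : Q → ℝ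

/-- Runs of an automaton over a term, reaching a given state at the root. -/
inductive RunOf {A : RankedAlphabet} {Q : Type} (M : WTA A Q) : Term A → Q → Type where
  | node (a : A.symb) (ts : Fin (A.ar a) → Term A) (qs : Fin (A.ar a) → Q) (q : Q)
      (hq : M.trans a qs q) (rs : ∀ i, RunOf M (ts i) (qs i)) : RunOf M (.node a ts) q

/-- The weight of a run: sum of the weights of the transitions used. -/
def RunOf.wt {A : RankedAlphabet} {Q : Type} {M : WTA A Q} :
    {t : Term A} → {q : Q} → RunOf M t q → ℝ
  | _, _, .node a _ qs q _ rs => (∑ i, (rs i).wt) + M.wt a qs q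

/-- Contexts: terms with exactly one hole. -/
inductive Ctx (A : RankedAlphabet) : Type where
  | hole : Ctx A
  | node (a : A.symb) (i : Fin (A.ar a)) (c : Ctx A) (ts : Fin (A.ar a) → Term A) : Ctx A

/-- Plugging a term into the hole of a context. -/
def Ctx.plug {A : RankedAlphabet} : Ctx A → Term A → Term A
  | .hole, t => t
  | .node a i c ts, t => .node a (Function.update ts i (c.plug t))

/-- Composition of contexts: plugging the second context into the hole of the first. -/
def Ctx.comp {A : RankedAlphabet} : Ctx A → Ctx A → Ctx A
  | .hole, d => d
  | .node a i c ts, d => .node a i (c.comp d) ts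

/-- Iterated composition of a context with itself. -/
def Ctx.pow {A : RankedAlphabet} (m : Ctx A) : ℕ → Ctx A
  | 0 => .hole
  | n + 1 => m.comp (m.pow n)

/-- Runs over a context, from a state (at the hole) to a state (at the root). -/
inductive CRun {A : RankedAlphabet} {Q : Type} (M : WTA A Q) : Ctx A → Q → Q → Type where
  | hole (p : Q) : CRun M .hole p p
  | node (a : A.symb) (i : Fin (A.ar a)) (c : Ctx A) (ts : Fin (A.ar a) → Term A)
      (qs : Fin (A.ar a) → Q) (p q : Q)
      (hq : M.trans a qs q)
      (hc : CRun M c p (qs i))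
      (rs : ∀ j, j ≠ i → RunOf M (ts j) (qs j)) : CRun M (.node a i c ts) p q

/-- The weight of a run over a context. -/
def CRun.wt {A : RankedAlphabet} {Q : Type} {M : WTA A Q} :
    {c : Ctx A} → {p q : Q} → CRun M c p q → ℝ
  | _, _, _, .hole _ => 0
  | _, _, _, .node a i _ _ qs _ q _ hc rs =>
      (∑ j : {j // j ≠ i}, (rs j.1 j.2).wt) + M.wt a qs q + hc.wt

/-- Gluing a run over a context with a run over a term yields a run over the plugged term. -/
def CRun.glue {A : RankedAlphabet} {Q : Type} {M : WTA A Q} {t : Term A} :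
    {c : Ctx A} → {p q : Q} → CRun M c p q → RunOf M t p → RunOf M (c.plug t) q
  | _, _, _, .hole _, r => r
  | _, _, _, .node a i c ts qs _ q hq hc rs, r =>
      .node a (Function.update ts i (c.plug t)) qs q hq
        (fun j =>
          if h : j = i then
            cast (by subst h; rw [Function.update_self]) (CRun.glue hc r)
          else
            cast (congrArg (fun s => RunOf M s (qs j))
              (Function.update_of_ne h (c.plug t) ts).symm) (rs j h))

/-- Gluing runs over composed contexts. -/
def CRun.cglue {A : RankedAlphabet} {Q : Type} {M : WTA A Q} {d : Ctx A} {p : Q} :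
    {c : Ctx A} → {q r : Q} → CRun M c q r → CRun M d p q → CRun M (c.comp d) p r
  | _, _, _, .hole _, rd => rd
  | _, _, _, .node a i c ts qs _ r hq hc rs, rd =>
      .node a i (c.comp d) ts qs p r hq (hc.cglue rd) rs

/-- The `n`-fold iteration of a loop run over a context. -/
def CRun.pow {A : RankedAlphabet} {Q : Type} {M : WTA A Q} {m : Ctx A} {q : Q}
    (σ : CRun M m q q) : (n : ℕ) → CRun M (m.pow n) q q
  | 0 => .hole q
  | n + 1 => σ.cglue (σ.pow n)

/-- `x` is the weight of some accepting run of `M` over `t`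
(weight of the run plus the final-state weight). -/
def AccWeight {A : RankedAlphabet} {Q : Type} (M : WTA A Q) (t : Term A) (x : ℝ) : Prop :=
  ∃ (q : Q) (r : RunOf M t q), M.final q ∧ r.wt + M.fwt q = x

/-- `M` has some accepting run over `t`. -/
def HasAcc {A : RankedAlphabet} {Q : Type} (M : WTA A Q) (t : Term A) : Prop :=
  ∃ x, AccWeight M t x

/-- `f` is the max-plus semantics of `M`: `f t = ⊥` iff there is no accepting run,
and otherwise `f t` is the maximum weight of an accepting run. -/
def ComputesMax {A : RankedAlphabet} {Q : Type} (M : WTA A Q) (f : Term A → Option ℝ) : Prop :=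
  ∀ t, (f t = none ↔ ¬ HasAcc M t) ∧
    ∀ x, f t = some x → AccWeight M t x ∧ ∀ y, AccWeight M t y → y ≤ x

/-- `f` is the min-plus semantics of `M`. -/
def ComputesMin {A : RankedAlphabet} {Q : Type} (M : WTA A Q) (f : Term A → Option ℝ) : Prop :=
  ∀ t, (f t = none ↔ ¬ HasAcc M t) ∧
    ∀ x, f t = some x → AccWeight M t x ∧ ∀ y, AccWeight M t y → x ≤ y

/-- An automaton is unambiguous if every term has at most one accepting run. -/
def Unambiguous {A : RankedAlphabet} {Q : Type} (M : WTA A Q) : Prop :=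
  ∀ (t : Term A) (q q' : Q) (r : RunOf M t q) (r' : RunOf M t q'),
    M.final q → M.final q' → q = q' ∧ HEq r r'

/-- The order on `ℝ ∪ {⊥}` in which `⊥` is comparable only with itself. -/
def OLe : Option ℝ → Option ℝ → Prop
  | none, none => True
  | some x, some y => x ≤ y
  | _, _ => False

/-- Shifting a value of `ℝ ∪ {⊥}` by a real number. -/
def oshift (u : Option ℝ) (x : ℝ) : Option ℝ := u.map (· + x)

/-- The set of states reachable at the root by some run over `t`. -/
def reachSet {A : RankedAlphabet} {Q : Type} (M : WTA A Q) (t : Term A) : Set Q :=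
  {q | Nonempty (RunOf M t q)}

/-- The set of states at the hole from which there is an accepting run over the context `c`. -/
def prodSet {A : RankedAlphabet} {Q : Type} (M : WTA A Q) (c : Ctx A) : Set Q :=
  {p | ∃ q, M.final q ∧ Nonempty (CRun M c p q)}

section Bi
variable {A : RankedAlphabet} {Q1 Q2 : Type} (M1 : WTA A Q1) (M2 : WTA A Q2)

/-- Reachable states of the disjoint union of the two automata. -/
def biReach (t : Term A) : Set (Q1 ⊕ Q2) :=
  Sum.inl '' reachSet M1 t ∪ Sum.inr '' reachSet M2 t

/-- Productive states of the disjoint union of the two automata. -/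
def biProd (c : Ctx A) : Set (Q1 ⊕ Q2) :=
  Sum.inl '' prodSet M1 c ∪ Sum.inr '' prodSet M2 c

/-- Final states of the disjoint union of the two automata. -/
def biFinal : Set (Q1 ⊕ Q2) :=
  Sum.inl '' {q | M1.final q} ∪ Sum.inr '' {q | M2.final q}

/-- Transition relation of the disjoint union of the two automata. -/
def biTrans (a : A.symb) (qs : Fin (A.ar a) → Q1 ⊕ Q2) (q : Q1 ⊕ Q2) : Prop :=
  (∃ (qs' : Fin (A.ar a) → Q1) (q' : Q1),
      qs = Sum.inl ∘ qs' ∧ q = Sum.inl q' ∧ M1.trans a qs' q') ∨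
  (∃ (qs' : Fin (A.ar a) → Q2) (q' : Q2),
      qs = Sum.inr ∘ qs' ∧ q = Sum.inr q' ∧ M2.trans a qs' q')

/-- The family `Reachable` of sets of states of the form `Reach(t)`. -/
def ReachableSets : Set (Set (Q1 ⊕ Q2)) := {S | ∃ t, biReach M1 M2 t = S}

/-- The family `Productive` of sets of states of the form `Prod(c)`. -/
def ProductiveSets : Set (Set (Q1 ⊕ Q2)) := {S | ∃ c, biProd M1 M2 c = S}

/-- `t` refines `s` for `P` with shift `x`. -/
def Refines (P : Set (Q1 ⊕ Q2)) (t s : Term A) (x : ℝ) : Prop :=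
  biReach M1 M2 s = biReach M1 M2 t ∧
  (∀ p : Q1, Sum.inl p ∈ P → ∀ ρ : RunOf M1 s p, ∃ ρ' : RunOf M1 t p, ρ.wt ≤ ρ'.wt + x) ∧
  (∀ q : Q2, Sum.inr q ∈ P → ∀ τ : RunOf M2 s q, ∃ τ' : RunOf M2 t q, τ'.wt + x ≤ τ.wt)

end Bi

/-- Transitions of the product automaton `A_pro`, relative to a transition relation `Δ`. -/
def ProTrans {A : RankedAlphabet} {Q : Type}
    (Δ : ∀ a : A.symb, (Fin (A.ar a) → Q) → Q → Prop) (a : A.symb)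
    (RPs : Fin (A.ar a) → Set Q × Set Q) (RP : Set Q × Set Q) : Prop :=
  RP.1 = {r | ∃ rs, Δ a rs r ∧ ∀ j, rs j ∈ (RPs j).1} ∧
  ∀ i, (RPs i).2 =
    {ri | ∃ rs p, Δ a rs p ∧ rs i = ri ∧ (∀ j, j ≠ i → rs j ∈ (RPs j).1) ∧ p ∈ RP.2}

/-!
Pumping a max-loop `ρ` and a min-loop `τ`, both at states of `Prod(c) ∩ Reach(u)`, yields
accepting runs over `c[mⁿ[u]]` of weights `K + n·wt ρ` and `K' + n·wt τ`; separation
`⟦A_max⟧ ≤ ⟦A_min⟧` for all `n` forces `wt ρ ≤ wt τ`. It remains to bound the max-loop weights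
from above when there is no min-loop: if some max-loop exists then `c[m^N[u]]`, `N = |Q_min|`,
is in the common support, and the pigeonhole principle applied to an accepting run of `A_min`
over it gives a min-loop `λ` over some `m^d`, not necessarily at a state of `Reach(u)`, whose
pumping forces `d·wt ρ ≤ wt λ`. Min-loop weights are bounded below symmetrically, and any `x`
between the two sets works.
-/

namespace Ctx

variable {A : RankedAlphabet}

lemma comp_plug (c d : Ctx A) (t : Term A) : (c.comp d).plug t = c.plug (d.plug t) := by
  induction c with
  | hole => rfl
  | node a i c ts ih => simp [comp, plug, ih]

lemma comp_assoc (c d e : Ctx A) : (c.comp d).comp e = c.comp (d.comp e) := by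
  induction c with
  | hole => rfl
  | node a i c ts ih => simp [comp, ih]

lemma pow_add (m : Ctx A) (a b : ℕ) : m.pow (a + b) = (m.pow a).comp (m.pow b) := by
  induction a with
  | zero => rw [Nat.zero_add]; rfl
  | succ a ih =>
    rw [Nat.succ_add]
    exact (congrArg m.comp ih).trans (comp_assoc m _ _).symm

lemma pow_mul (m : Ctx A) (d k : ℕ) : (m.pow d).pow k = m.pow (d * k) := by
  induction k with
  | zero => rfl
  | succ k ih =>
    show (m.pow d).comp ((m.pow d).pow k) = _
    rw [ih, Nat.mul_succ, Nat.add_comm, pow_add]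

lemma pow_add_plug (m : Ctx A) (a b : ℕ) (t : Term A) :
    (m.pow (a + b)).plug t = (m.pow a).plug ((m.pow b).plug t) := by
  rw [pow_add, comp_plug]

end Ctx

section Runs

variable {A : RankedAlphabet} {Q : Type} {M : WTA A Q}

lemma RunOf.wt_cast {t t' : Term A} {q : Q} (h : t = t')
    (e : RunOf M t q = RunOf M t' q) (r : RunOf M t q) : (cast e r).wt = r.wt := by
  subst h
  rfl

lemma CRun.wt_glue {t : Term A} {c : Ctx A} {p q : Q} (σ : CRun M c p q) (r : RunOf M t p) :
    (σ.glue r).wt = σ.wt + r.wt := by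
  induction σ with
  | hole p => simp [CRun.glue, CRun.wt]; rfl
  | node a i c ts qs p q hq hc rs ih =>
    simp only [CRun.glue, RunOf.wt, CRun.wt]
    rw [Fintype.sum_eq_add_sum_subtype_ne _ i, dif_pos rfl,
      RunOf.wt_cast (Function.update_self i (c.plug t) ts).symm, ih]
    rw [Fintype.sum_congr _ (fun j : {j // j ≠ i} => (rs j.1 j.2).wt) fun j => by
      rw [dif_neg j.2, RunOf.wt_cast (Function.update_of_ne j.2 (c.plug t) ts).symm]]
    ring

lemma CRun.wt_cglue {c d : Ctx A} {p q r : Q} (σ : CRun M c q r) (ρ : CRun M d p q) :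
    (σ.cglue ρ).wt = σ.wt + ρ.wt := by
  induction σ with
  | hole => simp [CRun.cglue, CRun.wt]; rfl
  | node a i c ts qs p' q' hq hc rs ih =>
    simp only [CRun.cglue, CRun.wt, ih]
    ring

lemma CRun.wt_pow {m : Ctx A} {p : Q} (σ : CRun M m p p) (n : ℕ) :
    (σ.pow n).wt = n * σ.wt := by
  induction n with
  | zero => simp [CRun.pow, CRun.wt]
  | succ n ih =>
    show (σ.cglue (σ.pow n)).wt = _
    rw [CRun.wt_cglue, ih]
    push_cast
    ring

lemma RunOf.exists_split_plug {t : Term A} (c : Ctx A) {q : Q} (r : RunOf M (c.plug t) q) :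
    ∃ p, Nonempty (CRun M c p q) ∧ Nonempty (RunOf M t p) := by
  induction c generalizing q with
  | hole => exact ⟨q, ⟨.hole q⟩, ⟨r⟩⟩
  | node a i c ts ih =>
    cases r with
    | node _ _ qs _ hq rs =>
      obtain ⟨p, ⟨κ⟩, hr⟩ := ih (Function.update_self i (c.plug t) ts ▸ rs i)
      exact ⟨p, ⟨.node a i c ts qs p q hq κ
        fun j hj => Function.update_of_ne hj (c.plug t) ts ▸ rs j⟩, hr⟩

lemma RunOf.exists_chain_pow_plug {u : Term A} {m : Ctx A} (n : ℕ) {q : Q}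
    (r : RunOf M ((m.pow n).plug u) q) :
    ∃ ps : ℕ → Q, ps n = q ∧ Nonempty (RunOf M u (ps 0)) ∧
      ∀ i < n, Nonempty (CRun M m (ps i) (ps (i + 1))) := by
  induction n generalizing q with
  | zero => exact ⟨fun _ => q, rfl, ⟨r⟩, fun i hi => absurd hi (Nat.not_lt_zero i)⟩
  | succ n ih =>
    rw [Ctx.pow, Ctx.comp_plug] at r
    obtain ⟨p, hκ, ⟨r'⟩⟩ := r.exists_split_plug m
    obtain ⟨ps, hn, hu, hchain⟩ := ih r'
    refine ⟨Function.update ps (n + 1) q, by simp, by simpa using hu, fun i hi => ?_⟩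
    rcases Nat.lt_succ_iff_lt_or_eq.1 hi with hi | rfl
    · simpa [Nat.ne_of_lt hi, Nat.ne_of_lt (Nat.lt_succ_of_lt hi)] using hchain i hi
    · simpa [hn] using hκ

lemma nonempty_crun_pow_of_chain {m : Ctx A} {n : ℕ} {ps : ℕ → Q}
    (h : ∀ i < n, Nonempty (CRun M m (ps i) (ps (i + 1)))) (k : ℕ) {i : ℕ} (hik : i + k ≤ n) :
    Nonempty (CRun M (m.pow k) (ps i) (ps (i + k))) := by
  induction k with
  | zero => exact ⟨.hole (ps i)⟩
  | succ k ih =>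
    obtain ⟨σ⟩ := h (i + k) (by omega)
    obtain ⟨ρ⟩ := ih (by omega)
    exact ⟨σ.cglue ρ⟩

lemma accWeight_glue {c : Ctx A} {t : Term A} {p qf : Q} (hqf : M.final qf)
    (κ : CRun M c p qf) (r : RunOf M t p) :
    AccWeight M (c.plug t) (κ.wt + r.wt + M.fwt qf) :=
  ⟨qf, κ.glue r, hqf, by rw [CRun.wt_glue]⟩

lemma accWeight_pow_of_loop {c m : Ctx A} {u : Term A} {p qf : Q} (hqf : M.final qf)
    (κ : CRun M c p qf) (σ : CRun M m p p) (r : RunOf M u p) (n : ℕ) :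
    AccWeight M (c.plug ((m.pow n).plug u)) ((κ.wt + r.wt + M.fwt qf) + n * σ.wt) := by
  have h := accWeight_glue hqf (κ.cglue (σ.pow n)) r
  rw [Ctx.comp_plug, CRun.wt_cglue, CRun.wt_pow] at h
  convert h using 1
  ring

/-- Pumping for a single automaton: among the `|Q| + 1` states met by an accepting run over
`c[m^|Q|[u]]` two coincide, and the segment between them is a loop over a power of `m`. -/
lemma HasAcc.exists_pumping [Fintype Q] {c m : Ctx A} {u : Term A}
    (h : HasAcc M (c.plug ((m.pow (Fintype.card Q)).plug u))) :
    ∃ (e d : ℕ) (C W : ℝ), 1 ≤ d ∧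
      ∀ k : ℕ, AccWeight M (c.plug ((m.pow (e + d * k)).plug u)) (C + k * W) := by
  set N := Fintype.card Q
  obtain ⟨-, qf, r, hqf, -⟩ := h
  obtain ⟨q, ⟨κ⟩, ⟨r'⟩⟩ := r.exists_split_plug c
  obtain ⟨ps, hpsN, ⟨ru⟩, hchain⟩ := r'.exists_chain_pow_plug N
  obtain ⟨i, j, hij, hjN, hpij⟩ : ∃ i j : ℕ, i < j ∧ j ≤ N ∧ ps i = ps j := by
    obtain ⟨x, y, hne, hxy⟩ :=
      Fintype.exists_ne_map_eq_of_card_lt (fun i : Fin (N + 1) => ps i) (by simp [N])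
    rcases Fin.lt_or_lt_of_ne hne with h | h
    · exact ⟨x, y, h, Nat.lt_succ_iff.1 y.2, hxy⟩
    · exact ⟨y, x, h, Nat.lt_succ_iff.1 x.2, hxy.symm⟩
  obtain ⟨β⟩ := nonempty_crun_pow_of_chain hchain i (i := 0) (by omega)
  obtain ⟨σ⟩ := nonempty_crun_pow_of_chain hchain (j - i) (i := i) (by omega)
  obtain ⟨α⟩ := nonempty_crun_pow_of_chain hchain (N - j) (i := j) (by omega)
  rw [Nat.zero_add] at β
  rw [Nat.add_sub_cancel' hij.le, ← hpij] at σ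
  rw [Nat.add_sub_cancel' hjN, hpsN, ← hpij] at α
  refine ⟨N - j + i, j - i, (κ.cglue α).wt + (β.glue ru).wt + M.fwt qf, σ.wt, by omega,
    fun k => ?_⟩
  have h := accWeight_pow_of_loop hqf (κ.cglue α) σ (β.glue ru) k
  rwa [Ctx.comp_plug, Ctx.pow_mul, ← Ctx.pow_add_plug, ← Ctx.pow_add_plug,
    Nat.add_right_comm (N - j)] at h

end Runs

lemma le_of_forall_nat_add_mul_le {a b s t : ℝ} (h : ∀ k : ℕ, a + k * s ≤ b + k * t) :
    s ≤ t := by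
  by_contra! hts
  obtain ⟨k, hk⟩ := exists_nat_gt ((b - a) / (s - t))
  rw [div_lt_iff₀ (sub_pos.2 hts), mul_sub] at hk
  have := h k
  linarith

lemma exists_mem_upperBounds_inter_lowerBounds {S T : Set ℝ} (hS : BddAbove S)
    (hT : BddBelow T) (hST : ∀ s ∈ S, ∀ t ∈ T, s ≤ t) :
    (upperBounds S ∩ lowerBounds T).Nonempty := by
  rcases S.eq_empty_or_nonempty with rfl | hS'
  · obtain ⟨b, hb⟩ := hT
    exact ⟨b, by simp, hb⟩
  · exact ⟨sSup S, fun s hs => le_csSup hS hs, fun t ht => csSup_le hS' fun s hs => hST s hs t ht⟩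

section Loops

variable {A : RankedAlphabet} {Q Q1 Q2 : Type}

def loopWeights (M : WTA A Q) (c : Ctx A) (u : Term A) (m : Ctx A) : Set ℝ :=
  {w | ∃ p ∈ prodSet M c ∩ reachSet M u, ∃ σ : CRun M m p p, σ.wt = w}

lemma exists_accWeight_pow_of_mem_loopWeights {M : WTA A Q} {c m : Ctx A} {u : Term A} {w : ℝ}
    (hw : w ∈ loopWeights M c u m) :
    ∃ K, ∀ n : ℕ, AccWeight M (c.plug ((m.pow n).plug u)) (K + n * w) := by
  obtain ⟨p, ⟨⟨qf, hqf, ⟨κ⟩⟩, ⟨r⟩⟩, σ, rfl⟩ := hw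
  exact ⟨_, accWeight_pow_of_loop hqf κ σ r⟩

variable {M1 : WTA A Q1} {M2 : WTA A Q2} {c m : Ctx A} {u : Term A}

lemma le_of_mem_loopWeights
    (hsep : ∀ t y z, AccWeight M1 t y → AccWeight M2 t z → y ≤ z) {w1 w2 : ℝ}
    (h1 : w1 ∈ loopWeights M1 c u m) (h2 : w2 ∈ loopWeights M2 c u m) : w1 ≤ w2 := by
  obtain ⟨K1, hK1⟩ := exists_accWeight_pow_of_mem_loopWeights h1
  obtain ⟨K2, hK2⟩ := exists_accWeight_pow_of_mem_loopWeights h2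
  exact le_of_forall_nat_add_mul_le fun k => hsep _ _ _ (hK1 k) (hK2 k)

lemma bddAbove_loopWeights [Fintype Q2]
    (hsep : ∀ t y z, AccWeight M1 t y → AccWeight M2 t z → y ≤ z)
    (hsupp : ∀ t, HasAcc M1 t → HasAcc M2 t) :
    BddAbove (loopWeights M1 c u m) := by
  rcases (loopWeights M1 c u m).eq_empty_or_nonempty with h | ⟨w0, hw0⟩
  · simp [h]
  obtain ⟨K0, hK0⟩ := exists_accWeight_pow_of_mem_loopWeights hw0
  obtain ⟨e, d, C, W, hd, hpump⟩ := (hsupp _ ⟨_, hK0 (Fintype.card Q2)⟩).exists_pumping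
  refine ⟨W / d, fun w hw => ?_⟩
  obtain ⟨K, hK⟩ := exists_accWeight_pow_of_mem_loopWeights hw
  have hdw : d * w ≤ W := le_of_forall_nat_add_mul_le (a := K + e * w) (b := C) fun k => by
    have := hsep _ _ _ (hK (e + d * k)) (hpump k)
    push_cast at this
    linarith
  rwa [le_div_iff₀ (by exact_mod_cast hd), mul_comm]

lemma bddBelow_loopWeights [Fintype Q1]
    (hsep : ∀ t y z, AccWeight M1 t y → AccWeight M2 t z → y ≤ z)
    (hsupp : ∀ t, HasAcc M2 t → HasAcc M1 t) :
    BddBelow (loopWeights M2 c u m) := by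
  rcases (loopWeights M2 c u m).eq_empty_or_nonempty with h | ⟨w0, hw0⟩
  · simp [h]
  obtain ⟨K0, hK0⟩ := exists_accWeight_pow_of_mem_loopWeights hw0
  obtain ⟨e, d, C, W, hd, hpump⟩ := (hsupp _ ⟨_, hK0 (Fintype.card Q1)⟩).exists_pumping
  refine ⟨W / d, fun w hw => ?_⟩
  obtain ⟨K, hK⟩ := exists_accWeight_pow_of_mem_loopWeights hw
  have hdw : W ≤ d * w := le_of_forall_nat_add_mul_le (a := C) (b := K + e * w) fun k => by
    have := hsep _ _ _ (hpump k) (hK (e + d * k))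
    push_cast at this
    linarith
  rwa [div_le_iff₀ (by exact_mod_cast hd), mul_comm]

end Loops

section Semantics

variable {A : RankedAlphabet} {Q1 Q2 : Type} {Mmax : WTA A Q1} {Mmin : WTA A Q2}
  {f g : Term A → Option ℝ}

lemma accWeight_le_of_computes (hf : ComputesMax Mmax f) (hg : ComputesMin Mmin g)
    (hle : ∀ t, OLe (f t) (g t)) (t : Term A) (y z : ℝ)
    (hy : AccWeight Mmax t y) (hz : AccWeight Mmin t z) : y ≤ z := by
  have h := hle t
  cases hft : f t with
  | none => exact absurd ⟨y, hy⟩ ((hf t).1.1 hft)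
  | some a =>
    cases hgt : g t with
    | none => simp [hft, hgt, OLe] at h
    | some b =>
      simp only [hft, hgt, OLe] at h
      linarith [((hf t).2 a hft).2 y hy, ((hg t).2 b hgt).2 z hz]

lemma hasAcc_iff_of_computes (hf : ComputesMax Mmax f) (hg : ComputesMin Mmin g)
    (hle : ∀ t, OLe (f t) (g t)) (t : Term A) : HasAcc Mmax t ↔ HasAcc Mmin t := by
  rw [← not_iff_not, ← (hf t).1, ← (hg t).1]
  have h := hle t
  revert h
  cases f t <;> cases g t <;> simp [OLe]

end Semantics

lemma inl_mem_biProd_inter_biReach {A : RankedAlphabet} {Q1 Q2 : Type} {M1 : WTA A Q1}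
    {M2 : WTA A Q2} {c : Ctx A} {u : Term A} {p : Q1} :
    Sum.inl p ∈ biProd M1 M2 c ∩ biReach M1 M2 u ↔ p ∈ prodSet M1 c ∩ reachSet M1 u := by
  simp [biProd, biReach]

lemma inr_mem_biProd_inter_biReach {A : RankedAlphabet} {Q1 Q2 : Type} {M1 : WTA A Q1}
    {M2 : WTA A Q2} {c : Ctx A} {u : Term A} {q : Q2} :
    Sum.inr q ∈ biProd M1 M2 c ∩ biReach M1 M2 u ↔ q ∈ prodSet M2 c ∩ reachSet M2 u := by
  simp [biProd, biReach]

/-- pumping lemma for separated tropical automata: assuming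
`⟦A_max⟧ ≤ ⟦A_min⟧`, for `P = Prod(c)`, `R = Reach(u)` and any context `m`, there is a
real `x` bounding from above the weight of every max-plus loop run on `m` at a state of
`P ∩ R` and from below the weight of every min-plus loop run on `m` at a state of `P ∩ R`. -/
theorem pumping_lemma {A : RankedAlphabet} {Q1 Q2 : Type}
    [Fintype Q1] [Fintype Q2] (Mmax : WTA A Q1) (Mmin : WTA A Q2)
    (f g : Term A → Option ℝ)
    (hf : ComputesMax Mmax f) (hg : ComputesMin Mmin g)
    (hle : ∀ t, OLe (f t) (g t))
    (c : Ctx A) (u : Term A) (m : Ctx A) :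
    ∃ x : ℝ,
      (∀ p : Q1, Sum.inl p ∈ biProd Mmax Mmin c ∩ biReach Mmax Mmin u →
        ∀ ρ : CRun Mmax m p p, ρ.wt ≤ x) ∧
      (∀ q : Q2, Sum.inr q ∈ biProd Mmax Mmin c ∩ biReach Mmax Mmin u →
        ∀ τ : CRun Mmin m q q, x ≤ τ.wt) := by
  have hsep := accWeight_le_of_computes hf hg hle
  have hsupp := hasAcc_iff_of_computes hf hg hle
  obtain ⟨x, hxmax, hxmin⟩ := exists_mem_upperBounds_inter_lowerBounds
    (bddAbove_loopWeights hsep fun t => (hsupp t).1)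
    (bddBelow_loopWeights hsep fun t => (hsupp t).2)
    fun _ h1 _ h2 => le_of_mem_loopWeights hsep h1 h2
  exact ⟨x, fun p hp ρ => hxmax ⟨p, inl_mem_biProd_inter_biReach.1 hp, ρ, rfl⟩,
    fun q hq τ => hxmin ⟨q, inr_mem_biProd_inter_biReach.1 hq, τ, rfl⟩⟩
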